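/- Let n ≥ 1, R > 0, and let ω : B_R → (ℝ² →ₗ[ℝ] Matrix n n ℂ) be a C² connection form with curvature Ω, satisfying the axial gauge condition ω((s,0))[e₁] = 0 for all s ∈ (0,R), where e₁ = (1,0). For r ∈ (0,R) let g_r : [0,1] → Matrix n n ℂ be the parallel transport along the circle of radius r. Then for every r ∈ (0,R), d/dr g_r(1) = 2πr ∫₀¹ g_r(1)·g_r(t)⁻¹·Ω(r e^{2πit})[i e^{2πit}, e^{2πit}]·g_r(t) dt. -/

import Mathlib

open MeasureTheory Set
open scoped ENNReal Matrix Real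

attribute [local instance] Matrix.frobeniusNormedAddCommGroup Matrix.frobeniusNormedSpace

noncomputable instance (n : ℕ) : NormedAddCommGroup (ℂ →L[ℝ] Matrix (Fin n) (Fin n) ℂ) :=
  ContinuousLinearMap.toNormedAddCommGroup

noncomputable instance (n : ℕ) : NormedSpace ℝ (ℂ →L[ℝ] Matrix (Fin n) (Fin n) ℂ) :=
  ContinuousLinearMap.toNormedSpace

/-- The curvature `Ω(x)[u,v]` of a connection form `ω` on the plane `ℝ² ≃ ℂ`. -/
noncomputable def curvature {n : ℕ}
    (ω : ℂ → (ℂ →L[ℝ] Matrix (Fin n) (Fin n) ℂ)) (x u v : ℂ) : Matrix (Fin n) (Fin n) ℂ :=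
  fderiv ℝ ω x u v - fderiv ℝ ω x v u + ω x u * ω x v - ω x v * ω x u

/-- The point `e^{2πit} = (cos 2πt, sin 2πt)` of the unit circle, `ℝ²` being identified
with `ℂ`. -/
noncomputable def e2πi (t : ℝ) : ℂ := Complex.exp (2 * Real.pi * Complex.I * t)

/-!
Write parallel transport along the circle of radius `s` as `g_s' = A(s,t) g_s` with
`A(s,t) = -2πs ω(se^{2πit})[ie^{2πit}]`. Duhamel's formula
`g_s(1) - g_r(1) = ∫₀¹ g_r(1) g_r(t)⁻¹ (A(s,t) - A(r,t)) g_s(t) dt`, Grönwall bounds and dominated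
convergence give `d/dr g_r(1) = ∫₀¹ g_r(1) g_r(t)⁻¹ ∂_r A(r,t) g_r(t) dt`; `g_r(t)` is invertible
by backward uniqueness for linear ODEs. For `B(t) = ω(re^{2πit})[e^{2πit}]` one computes
`(g_r⁻¹ B g_r)' = g_r⁻¹ (2πr Ω(re^{2πit})[ie^{2πit}, e^{2πit}] - ∂_r A) g_r`, and `B` vanishes at
`t = 0` and `t = 1` by the axial gauge condition, so under the integral `∂_r A` may be replaced by
the curvature term.
-/

open Filter Topology Function

theorem HasDerivWithinAt.ringInverse {𝕜 R : Type*} [NontriviallyNormedField 𝕜] [NormedRing R]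
    [NormedAlgebra 𝕜 R] [HasSummableGeomSeries R] {g : 𝕜 → R} {g' : R} {s : Set 𝕜} {t : 𝕜}
    (hg : HasDerivWithinAt g g' s t) (hu : IsUnit (g t)) :
    HasDerivWithinAt (fun τ => Ring.inverse (g τ))
      (-(Ring.inverse (g t) * g' * Ring.inverse (g t))) s t := by
  obtain ⟨u, hu⟩ := hu
  have h := (hu ▸ hasFDerivAt_ringInverse (𝕜 := 𝕜) u).comp_hasDerivWithinAt t hg
  rwa [← hu, Ring.inverse_unit]

theorem intervalIntegral.integral_eq_sub_of_hasDerivWithinAt_Icc {E : Type*}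
    [NormedAddCommGroup E] [NormedSpace ℝ E] [CompleteSpace E] {f f' : ℝ → E} {a b t : ℝ}
    (hf : ∀ x ∈ Icc a b, HasDerivWithinAt f (f' x) (Icc a b) x)
    (hf' : ContinuousOn f' (Icc a b)) (ht : t ∈ Icc a b) :
    ∫ x in a..t, f' x = f t - f a := by
  have hsub : Icc a t ⊆ Icc a b := Icc_subset_Icc_right ht.2
  refine integral_eq_sub_of_hasDerivAt_of_le ht.1
    (fun x hx => (hf x (hsub hx)).continuousWithinAt.mono hsub) (fun x hx => ?_)
    ((hf'.mono hsub).intervalIntegrable_of_Icc ht.1)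
  exact (hf x (hsub (Ioo_subset_Icc_self hx))).hasDerivAt
    (Icc_mem_nhds hx.1 (hx.2.trans_le ht.2))

theorem Convex.norm_slope_le_of_norm_hasDerivWithin_le {F : Type*} [NormedAddCommGroup F]
    [NormedSpace ℝ F] {f f' : ℝ → F} {s : Set ℝ} {C x y : ℝ}
    (hf : ∀ x ∈ s, HasDerivWithinAt f (f' x) s x) (bound : ∀ x ∈ s, ‖f' x‖ ≤ C)
    (hs : Convex ℝ s) (hx : x ∈ s) (hy : y ∈ s) : ‖slope f x y‖ ≤ C := by
  rw [slope_def_module, norm_smul, norm_inv]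
  rcases eq_or_ne y x with rfl | hne
  · simpa using (norm_nonneg _).trans (bound y hy)
  · rw [inv_mul_le_iff₀ (norm_pos_iff.2 (sub_ne_zero.2 hne)), mul_comm]
    exact hs.norm_image_sub_le_of_norm_hasDerivWithin_le hf bound hx hy

theorem hasDerivAt_of_slope_eq_integral {F : Type*} [NormedAddCommGroup F] [NormedSpace ℝ F]
    [CompleteSpace F] {G f₀ : ℝ → F} {f : ℝ → ℝ → F} {r C : ℝ}
    (hslope : ∀ᶠ s in 𝓝[≠] r, slope G r s = ∫ t in (0:ℝ)..1, f s t)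
    (hf : ∀ᶠ s in 𝓝[≠] r, ContinuousOn (f s) (Icc 0 1))
    (hbound : ∀ᶠ s in 𝓝[≠] r, ∀ t ∈ Icc (0:ℝ) 1, ‖f s t‖ ≤ C)
    (hlim : ∀ t ∈ Icc (0:ℝ) 1, Tendsto (f · t) (𝓝[≠] r) (𝓝 (f₀ t))) :
    HasDerivAt G (∫ t in (0:ℝ)..1, f₀ t) r := by
  have hI : uIoc (0:ℝ) 1 ⊆ Icc 0 1 := by rw [uIoc_of_le zero_le_one]; exact Ioc_subset_Icc_self
  rw [hasDerivAt_iff_tendsto_slope]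
  refine Tendsto.congr' (EventuallyEq.symm hslope) ?_
  refine intervalIntegral.tendsto_integral_filter_of_dominated_convergence (fun _ => C) ?_ ?_
    intervalIntegrable_const (ae_of_all _ fun t ht => hlim t (hI ht))
  · filter_upwards [hf] with s hs
    exact (hs.mono hI).aestronglyMeasurable measurableSet_uIoc
  · filter_upwards [hbound] with s hs
    exact ae_of_all _ fun t ht => hs t (hI ht)

section LinearODE

variable {E : Type*} [NormedRing E] [NormedAlgebra ℝ E] {A f g : ℝ → E} {K a b : ℝ}

theorem norm_le_mul_exp_of_hasDerivWithinAt_mul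
    (hf : ∀ t ∈ Icc a b, HasDerivWithinAt f (A t * f t) (Icc a b) t)
    (hA : ∀ t ∈ Icc a b, ‖A t‖ ≤ K) {t : ℝ} (ht : t ∈ Icc a b) :
    ‖f t‖ ≤ ‖f a‖ * Real.exp (K * (t - a)) := by
  rw [← gronwallBound_ε0]
  refine norm_le_gronwallBound_of_norm_deriv_right_le (fun t ht => (hf t ht).continuousWithinAt)
    (fun t ht => (hf t (Ico_subset_Icc_self ht)).mono_of_mem_nhdsWithin
      (Icc_mem_nhdsGE_of_mem ht)) le_rfl (fun t ht => ?_) t ht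
  rw [add_zero]
  exact (norm_mul_le _ _).trans
    (mul_le_mul_of_nonneg_right (hA t (Ico_subset_Icc_self ht)) (norm_nonneg _))

theorem eq_zero_of_hasDerivWithinAt_mul_of_eq_zero_right
    (hf : ∀ t ∈ Icc a b, HasDerivWithinAt f (A t * f t) (Icc a b) t)
    (hA : ∀ t ∈ Icc a b, ‖A t‖ ≤ K) (hb : f b = 0) {t : ℝ} (ht : t ∈ Icc a b) : f t = 0 := by
  have hlip : ∀ τ ∈ Ioc a b, LipschitzOnWith K.toNNReal (A τ * ·) univ := fun τ hτ =>
    LipschitzWith.lipschitzOnWith <| LipschitzWith.of_dist_le_mul fun x y => by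
      rw [dist_eq_norm, dist_eq_norm, ← mul_sub]
      exact (norm_mul_le _ _).trans (mul_le_mul_of_nonneg_right
        ((hA τ (Ioc_subset_Icc_self hτ)).trans (Real.le_coe_toNNReal K)) (norm_nonneg _))
  have hzero : ∀ τ ∈ Ioc a b, HasDerivWithinAt (0 : ℝ → E) (A τ * 0) (Iic τ) τ := fun τ _ => by
    rw [mul_zero]; exact hasDerivWithinAt_const τ _ 0
  exact ODE_solution_unique_of_mem_Icc_left hlip (fun τ hτ => (hf τ hτ).continuousWithinAt)
    (fun τ hτ => (hf τ (Ioc_subset_Icc_self hτ)).mono_of_mem_nhdsWithin (Icc_mem_nhdsLE_of_mem hτ))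
    (fun _ _ => trivial) continuousOn_const hzero (fun _ _ => trivial) hb ht

theorem isUnit_of_hasDerivWithinAt_mul [IsArtinianRing Eᵐᵒᵖ] (hA : ContinuousOn A (Icc a b))
    (hg : ∀ t ∈ Icc a b, HasDerivWithinAt g (A t * g t) (Icc a b) t) (ha : IsUnit (g a))
    {t : ℝ} (ht : t ∈ Icc a b) : IsUnit (g t) := by
  obtain ⟨K, hK⟩ := isCompact_Icc.exists_bound_of_continuousOn hA
  rw [IsArtinianRing.isUnit_iff_isLeftRegular]
  intro x y hxy
  have hsub : Icc a t ⊆ Icc a b := Icc_subset_Icc_right ht.2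
  have hzero := eq_zero_of_hasDerivWithinAt_mul_of_eq_zero_right (f := fun τ => g τ * (x - y))
    (fun τ hτ => by simpa [mul_assoc] using ((hg τ (hsub hτ)).mono hsub).mul_const (x - y))
    (fun τ hτ => hK τ (hsub hτ)) (by simp [mul_sub, hxy]) (left_mem_Icc.2 ht.1)
  exact sub_eq_zero.1 ((ha.mul_right_eq_zero).1 hzero)

variable [HasSummableGeomSeries E]

theorem hasDerivWithinAt_ringInverse_of_hasDerivWithinAt_mul {s : Set ℝ} {t : ℝ}
    (hg : HasDerivWithinAt g (A t * g t) s t) (hu : IsUnit (g t)) :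
    HasDerivWithinAt (fun τ => Ring.inverse (g τ)) (-(Ring.inverse (g t) * A t)) s t := by
  convert hg.ringInverse hu using 2
  rw [mul_assoc, mul_assoc, Ring.mul_inverse_cancel _ hu, mul_one]

theorem continuousOn_ringInverse_of_hasDerivWithinAt_mul {s : Set ℝ}
    (hg : ∀ t ∈ s, HasDerivWithinAt g (A t * g t) s t) (hunit : ∀ t ∈ s, IsUnit (g t)) :
    ContinuousOn (fun t => Ring.inverse (g t)) s := fun t ht =>
  (hasDerivWithinAt_ringInverse_of_hasDerivWithinAt_mul (hg t ht) (hunit t ht)).continuousWithinAt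

theorem hasDerivWithinAt_ringInverse_mul_mul {B : ℝ → E} {B' : E} {s : Set ℝ} {t : ℝ}
    (hg : HasDerivWithinAt g (A t * g t) s t) (hu : IsUnit (g t))
    (hB : HasDerivWithinAt B B' s t) :
    HasDerivWithinAt (fun τ => Ring.inverse (g τ) * B τ * g τ)
      (Ring.inverse (g t) * (B' + B t * A t - A t * B t) * g t) s t :=
  (((hasDerivWithinAt_ringInverse_of_hasDerivWithinAt_mul hg hu).mul hB).mul hg).congr_deriv
    (by simp only [Pi.mul_apply]; noncomm_ring)

theorem sub_eq_integral_of_hasDerivWithinAt_mul [CompleteSpace E] {A₁ A₂ g₁ g₂ : ℝ → E}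
    (hA₁ : ContinuousOn A₁ (Icc a b)) (hA₂ : ContinuousOn A₂ (Icc a b))
    (hg₁ : ∀ t ∈ Icc a b, HasDerivWithinAt g₁ (A₁ t * g₁ t) (Icc a b) t)
    (hg₂ : ∀ t ∈ Icc a b, HasDerivWithinAt g₂ (A₂ t * g₂ t) (Icc a b) t)
    (hunit : ∀ t ∈ Icc a b, IsUnit (g₂ t)) (ha : g₁ a = g₂ a) {t : ℝ} (ht : t ∈ Icc a b) :
    g₁ t - g₂ t = ∫ τ in a..t, g₂ t * Ring.inverse (g₂ τ) * (A₁ τ - A₂ τ) * g₁ τ := by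
  have hderiv : ∀ τ ∈ Icc a b, HasDerivWithinAt (fun τ => g₂ t * Ring.inverse (g₂ τ) * g₁ τ)
      (g₂ t * Ring.inverse (g₂ τ) * (A₁ τ - A₂ τ) * g₁ τ) (Icc a b) τ := fun τ hτ =>
    (((hasDerivWithinAt_ringInverse_of_hasDerivWithinAt_mul (hg₂ τ hτ) (hunit τ hτ)).const_mul
      (g₂ t)).mul (hg₁ τ hτ)).congr_deriv (by noncomm_ring)
  have hcont : ContinuousOn (fun τ => g₂ t * Ring.inverse (g₂ τ) * (A₁ τ - A₂ τ) * g₁ τ)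
      (Icc a b) :=
    ((continuousOn_const.mul (continuousOn_ringInverse_of_hasDerivWithinAt_mul hg₂ hunit)).mul
      (hA₁.sub hA₂)).mul fun τ hτ => (hg₁ τ hτ).continuousWithinAt
  rw [intervalIntegral.integral_eq_sub_of_hasDerivWithinAt_Icc hderiv hcont ht, ha,
    Ring.inverse_mul_cancel_right _ _ (hunit a (left_mem_Icc.2 (ht.1.trans ht.2))), mul_assoc,
    Ring.mul_inverse_cancel_left _ _ (hunit t ht)]

end LinearODE

section ParametricLinearODE

variable {E : Type*} [NormedRing E] [NormedAlgebra ℝ E] {A A' g : ℝ → ℝ → E} {a b r : ℝ}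

theorem exists_norm_le_of_hasDerivWithinAt_mul
    (hA : ContinuousOn (uncurry A) (Icc a b ×ˢ Icc 0 1))
    (hg : ∀ s ∈ Icc a b, ∀ t ∈ Icc (0:ℝ) 1, HasDerivWithinAt (g s) (A s t * g s t) (Icc 0 1) t)
    (hg0 : ∀ s ∈ Icc a b, g s 0 = 1) :
    ∃ C, ∀ s ∈ Icc a b, ∀ t ∈ Icc (0:ℝ) 1, ‖g s t‖ ≤ C := by
  obtain ⟨K, hK⟩ := (isCompact_Icc.prod isCompact_Icc).exists_bound_of_continuousOn hA
  refine ⟨‖(1 : E)‖ * Real.exp |K|, fun s hs t ht => ?_⟩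
  calc ‖g s t‖ ≤ ‖g s 0‖ * Real.exp (K * (t - 0)) :=
        norm_le_mul_exp_of_hasDerivWithinAt_mul (hg s hs) (fun τ hτ => hK (s, τ) ⟨hs, hτ⟩) ht
    _ ≤ ‖(1 : E)‖ * Real.exp |K| := by
        rw [hg0 s hs, sub_zero]
        gcongr
        calc K * t ≤ |K| * t := by gcongr; exacts [ht.1, le_abs_self K]
          _ ≤ |K| := mul_le_of_le_one_right (abs_nonneg K) ht.2

theorem exists_norm_mul_inverse_mul_slope_mul_le [HasSummableGeomSeries E]
    (hA : ContinuousOn (uncurry A) (Icc a b ×ˢ Icc 0 1))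
    (hA'c : ContinuousOn (uncurry A') (Icc a b ×ˢ Icc 0 1))
    (hA' : ∀ s ∈ Icc a b, ∀ t ∈ Icc (0:ℝ) 1, HasDerivAt (A · t) (A' s t) s)
    (hg : ∀ s ∈ Icc a b, ∀ t ∈ Icc (0:ℝ) 1, HasDerivWithinAt (g s) (A s t * g s t) (Icc 0 1) t)
    (hg0 : ∀ s ∈ Icc a b, g s 0 = 1) (hunit : ∀ t ∈ Icc (0:ℝ) 1, IsUnit (g r t))
    (hr : r ∈ Icc a b) :
    ∃ C, ∀ s ∈ Icc a b, ∀ t ∈ Icc (0:ℝ) 1, ∀ τ ∈ Icc (0:ℝ) 1,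
      ‖g r t * Ring.inverse (g r τ) * slope (A · τ) r s * g s τ‖ ≤ C := by
  obtain ⟨Cg, hCg⟩ := exists_norm_le_of_hasDerivWithinAt_mul hA hg hg0
  obtain ⟨CP, hCP⟩ := isCompact_Icc.exists_bound_of_continuousOn
    (continuousOn_ringInverse_of_hasDerivWithinAt_mul (hg r hr) hunit)
  obtain ⟨L, hL⟩ := (isCompact_Icc.prod isCompact_Icc).exists_bound_of_continuousOn hA'c
  refine ⟨Cg * CP * L * Cg, fun s hs t ht τ hτ => ?_⟩
  have hslope : ‖slope (A · τ) r s‖ ≤ L :=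
    (convex_Icc a b).norm_slope_le_of_norm_hasDerivWithin_le
      (fun x hx => (hA' x hx τ hτ).hasDerivWithinAt) (fun x hx => hL (x, τ) ⟨hx, hτ⟩) hr hs
  have hCg0 : 0 ≤ Cg := (norm_nonneg _).trans (hCg r hr t ht)
  have hCP0 : 0 ≤ CP := (norm_nonneg _).trans (hCP τ hτ)
  have hL0 : 0 ≤ L := (norm_nonneg _).trans hslope
  refine (norm_mul_le _ _).trans <|
    (mul_le_mul_of_nonneg_right norm_mul₃_le (norm_nonneg _)).trans ?_
  gcongr
  exacts [hCg r hr t ht, hCP τ hτ, hCg s hs τ hτ]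

theorem sub_eq_smul_integral_slope_of_hasDerivWithinAt_mul [CompleteSpace E]
    (hA : ∀ s ∈ Icc a b, ContinuousOn (A s) (Icc 0 1))
    (hg : ∀ s ∈ Icc a b, ∀ t ∈ Icc (0:ℝ) 1, HasDerivWithinAt (g s) (A s t * g s t) (Icc 0 1) t)
    (hg0 : ∀ s ∈ Icc a b, g s 0 = 1) (hunit : ∀ t ∈ Icc (0:ℝ) 1, IsUnit (g r t))
    (hr : r ∈ Icc a b) {s t : ℝ} (hs : s ∈ Icc a b) (ht : t ∈ Icc (0:ℝ) 1) :
    g s t - g r t =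
      (s - r) • ∫ τ in (0:ℝ)..t, g r t * Ring.inverse (g r τ) * slope (A · τ) r s * g s τ := by
  rw [sub_eq_integral_of_hasDerivWithinAt_mul (hA s hs) (hA r hr) (hg s hs) (hg r hr)
    hunit (by rw [hg0 s hs, hg0 r hr]) ht, ← intervalIntegral.integral_smul]
  refine intervalIntegral.integral_congr fun τ _ => ?_
  rw [← smul_mul_assoc, ← mul_smul_comm, sub_smul_slope, vsub_eq_sub]

theorem hasDerivAt_apply_one_of_hasDerivWithinAt_mul [CompleteSpace E]
    (hA : ContinuousOn (uncurry A) (Icc a b ×ˢ Icc 0 1))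
    (hA'c : ContinuousOn (uncurry A') (Icc a b ×ˢ Icc 0 1))
    (hA' : ∀ s ∈ Icc a b, ∀ t ∈ Icc (0:ℝ) 1, HasDerivAt (A · t) (A' s t) s)
    (hg : ∀ s ∈ Icc a b, ∀ t ∈ Icc (0:ℝ) 1, HasDerivWithinAt (g s) (A s t * g s t) (Icc 0 1) t)
    (hg0 : ∀ s ∈ Icc a b, g s 0 = 1) (hunit : ∀ t ∈ Icc (0:ℝ) 1, IsUnit (g r t))
    (hr : r ∈ Ioo a b) :
    HasDerivAt (fun s => g s 1)
      (∫ t in (0:ℝ)..1, g r 1 * Ring.inverse (g r t) * A' r t * g r t) r := by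
  have hrJ : r ∈ Icc a b := Ioo_subset_Icc_self hr
  have hJ : Icc a b ∈ 𝓝 r := Icc_mem_nhds hr.1 hr.2
  have hJ' : Icc a b ∈ 𝓝[≠] r := nhdsWithin_le_nhds hJ
  have hAt : ∀ s ∈ Icc a b, ContinuousOn (A s) (Icc 0 1) := fun s hs =>
    hA.comp (Continuous.prodMk_right s).continuousOn fun t ht => ⟨hs, ht⟩
  have hduh {s t : ℝ} (hs : s ∈ Icc a b) (ht : t ∈ Icc (0:ℝ) 1) :=
    sub_eq_smul_integral_slope_of_hasDerivWithinAt_mul hAt hg hg0 hunit hrJ hs ht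
  obtain ⟨C, hC⟩ := exists_norm_mul_inverse_mul_slope_mul_le hA hA'c hA' hg hg0 hunit hrJ
  have hcont : ∀ t ∈ Icc (0:ℝ) 1, Tendsto (g · t) (𝓝 r) (𝓝 (g r t)) := by
    intro t ht
    rw [← tendsto_sub_nhds_zero_iff]
    refine squeeze_zero_norm' (a := fun s => |s - r| * (C * |t - 0|)) ?_ ?_
    · filter_upwards [hJ] with s hs
      rw [hduh hs ht, norm_smul, Real.norm_eq_abs]
      gcongr
      refine intervalIntegral.norm_integral_le_of_norm_le_const fun τ hτ => hC s hs t ht τ ?_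
      rw [uIoc_of_le ht.1] at hτ
      exact ⟨hτ.1.le, hτ.2.trans ht.2⟩
    · simpa using ((continuous_sub_right r).abs.tendsto' r 0 (by simp)).mul_const (C * |t - 0|)
  refine hasDerivAt_of_slope_eq_integral (C := C) ?_ ?_ ?_ fun t ht =>
    (tendsto_const_nhds.mul (hasDerivAt_iff_tendsto_slope.1 (hA' r hrJ t ht))).mul
      ((hcont t ht).mono_left nhdsWithin_le_nhds)
  · filter_upwards [hJ', self_mem_nhdsWithin] with s hs hne
    rw [slope_def_module, hduh hs ⟨zero_le_one, le_rfl⟩, smul_smul,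
      inv_mul_cancel₀ (sub_ne_zero.2 hne), one_smul]
  · filter_upwards [hJ'] with s hs
    exact ((continuousOn_const.mul (continuousOn_ringInverse_of_hasDerivWithinAt_mul (hg r hrJ)
      hunit)).mul (((hAt s hs).sub (hAt r hrJ)).const_smul (s - r)⁻¹)).mul
      fun t ht => (hg s hs t ht).continuousWithinAt
  · filter_upwards [hJ'] with s hs
    exact hC s hs 1 ⟨zero_le_one, le_rfl⟩

end ParametricLinearODE

section Circle

theorem hasDerivAt_e2πi (t : ℝ) : HasDerivAt e2πi (2 * π * Complex.I * e2πi t) t := by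
  have h := ((Complex.ofRealCLM.hasDerivAt (x := t)).const_mul (2 * π * Complex.I)).cexp
  convert h using 1
  · rfl
  · simp [e2πi, mul_comm]

@[fun_prop]
theorem continuous_e2πi : Continuous e2πi := by
  unfold e2πi; fun_prop

theorem e2πi_zero : e2πi 0 = 1 := by simp [e2πi]

theorem e2πi_one : e2πi 1 = 1 := by simp [e2πi]

theorem ofReal_mul_e2πi_mem_ball {R s : ℝ} (hs : |s| < R) (t : ℝ) :
    (s : ℂ) * e2πi t ∈ Metric.ball 0 R := by
  rw [mem_ball_zero_iff, norm_mul, e2πi, Complex.norm_exp, Complex.norm_real, Real.norm_eq_abs]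
  simpa using hs

theorem ContinuousOn.comp_ofReal_mul_e2πi {F : Type*} [TopologicalSpace F] {f : ℂ → F} {R : ℝ}
    (hf : ContinuousOn f (Metric.ball 0 R)) :
    ContinuousOn (fun p : ℝ × ℝ => f (p.1 * e2πi p.2)) (Ioo (-R) R ×ˢ univ) :=
  hf.comp (by fun_prop) fun p hp => ofReal_mul_e2πi_mem_ball (abs_lt.2 hp.1) p.2

end Circle

section CircleTransportCoeff

variable {E : Type*} [NormedAddCommGroup E] [NormedSpace ℝ E] {ω : ℂ → (ℂ →L[ℝ] E)}
  {ω' : ℂ → (ℂ →L[ℝ] ℂ →L[ℝ] E)}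

/-- Parallel transport along the circle of radius `s` solves
`g' = circleTransportCoeff ω s t * g`. -/
noncomputable def circleTransportCoeff (ω : ℂ → (ℂ →L[ℝ] E)) (s t : ℝ) : E :=
  -((2 * π * s) • ω (s * e2πi t) (Complex.I * e2πi t))

noncomputable def circleTransportCoeffDeriv (ω : ℂ → (ℂ →L[ℝ] E))
    (ω' : ℂ → (ℂ →L[ℝ] ℂ →L[ℝ] E)) (s t : ℝ) : E :=
  -((2 * π) • ω (s * e2πi t) (Complex.I * e2πi t) +
    (2 * π * s) • ω' (s * e2πi t) (e2πi t) (Complex.I * e2πi t))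

theorem hasDerivAt_circleTransportCoeff {s t : ℝ}
    (hω : HasFDerivAt ω (ω' (s * e2πi t)) (s * e2πi t)) :
    HasDerivAt (circleTransportCoeff ω · t) (circleTransportCoeffDeriv ω ω' s t) s := by
  have hpt : HasDerivAt (fun σ : ℝ => (σ : ℂ) * e2πi t) (e2πi t) s := by
    simpa using (Complex.ofRealCLM.hasDerivAt (x := s)).mul_const (e2πi t)
  have h := (((hasDerivAt_id s).const_mul (2 * π)).smul ((hω.comp_hasDerivAt s hpt).clm_apply
    (hasDerivAt_const s (Complex.I * e2πi t)))).neg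
  convert h using 1
  · rfl
  · simp [circleTransportCoeffDeriv, add_comm]

theorem hasDerivAt_apply_ofReal_mul_e2πi {r t : ℝ}
    (hω : HasFDerivAt ω (ω' (r * e2πi t)) (r * e2πi t)) :
    HasDerivAt (fun τ => ω (r * e2πi τ) (e2πi τ))
      ((2 * π * r) • ω' (r * e2πi t) (Complex.I * e2πi t) (e2πi t) +
        (2 * π) • ω (r * e2πi t) (Complex.I * e2πi t)) t := by
  have h := (hω.comp_hasDerivAt t ((hasDerivAt_e2πi t).const_mul (r : ℂ))).clm_apply
    (hasDerivAt_e2πi t)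
  convert h using 1
  · rfl
  have hr : (r : ℂ) * (2 * π * Complex.I * e2πi t) = (2 * π * r : ℝ) • (Complex.I * e2πi t) := by
    rw [Complex.real_smul]; push_cast; ring
  have h2π : 2 * π * Complex.I * e2πi t = (2 * π : ℝ) • (Complex.I * e2πi t) := by
    rw [Complex.real_smul]; push_cast; ring
  rw [hr, h2π, map_smul, smul_apply, Function.comp_apply, map_smul]

theorem continuousOn_circleTransportCoeff {R : ℝ} (hω : ContinuousOn ω (Metric.ball 0 R)) :
    ContinuousOn (uncurry (circleTransportCoeff ω)) (Ioo (-R) R ×ˢ univ) :=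
  ((by fun_prop : Continuous fun p : ℝ × ℝ => 2 * π * p.1).continuousOn.smul
    (hω.comp_ofReal_mul_e2πi.clm_apply (by fun_prop))).neg

theorem continuousOn_circleTransportCoeffDeriv {R : ℝ} (hω : ContinuousOn ω (Metric.ball 0 R))
    (hω' : ContinuousOn ω' (Metric.ball 0 R)) :
    ContinuousOn (uncurry (circleTransportCoeffDeriv ω ω')) (Ioo (-R) R ×ˢ univ) :=
  ((continuousOn_const.smul (hω.comp_ofReal_mul_e2πi.clm_apply (by fun_prop))).add
    ((by fun_prop : Continuous fun p : ℝ × ℝ => 2 * π * p.1).continuousOn.smul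
      ((hω'.comp_ofReal_mul_e2πi.clm_apply (by fun_prop)).clm_apply (by fun_prop)))).neg

end CircleTransportCoeff

section CircleCurvature

variable {E : Type*} [NormedRing E] [NormedAlgebra ℝ E] {ω : ℂ → (ℂ →L[ℝ] E)}
  {ω' : ℂ → (ℂ →L[ℝ] ℂ →L[ℝ] E)}

/-- `Ω(se^{2πit})[ie^{2πit}, e^{2πit}]`, the curvature `Ω` of `ω` being computed with `ω'` in
place of the derivative of `ω`. For matrices and `ω' = fderiv ℝ ω` this is
`curvature ω (s * e2πi t) (Complex.I * e2πi t) (e2πi t)` by definition. -/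
noncomputable def circleCurvature (ω : ℂ → (ℂ →L[ℝ] E)) (ω' : ℂ → (ℂ →L[ℝ] ℂ →L[ℝ] E))
    (s t : ℝ) : E :=
  ω' (s * e2πi t) (Complex.I * e2πi t) (e2πi t) - ω' (s * e2πi t) (e2πi t) (Complex.I * e2πi t) +
    ω (s * e2πi t) (Complex.I * e2πi t) * ω (s * e2πi t) (e2πi t) -
    ω (s * e2πi t) (e2πi t) * ω (s * e2πi t) (Complex.I * e2πi t)

theorem continuousOn_circleCurvature {R : ℝ} (hω : ContinuousOn ω (Metric.ball 0 R))
    (hω' : ContinuousOn ω' (Metric.ball 0 R)) :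
    ContinuousOn (uncurry (circleCurvature ω ω')) (Ioo (-R) R ×ˢ univ) := by
  set S := Ioo (-R) R ×ˢ (univ : Set ℝ)
  have hωu : ContinuousOn (fun p : ℝ × ℝ => ω (p.1 * e2πi p.2) (Complex.I * e2πi p.2)) S :=
    hω.comp_ofReal_mul_e2πi.clm_apply (by fun_prop)
  have hωv : ContinuousOn (fun p : ℝ × ℝ => ω (p.1 * e2πi p.2) (e2πi p.2)) S :=
    hω.comp_ofReal_mul_e2πi.clm_apply (by fun_prop)
  have hω'uv : ContinuousOn
      (fun p : ℝ × ℝ => ω' (p.1 * e2πi p.2) (Complex.I * e2πi p.2) (e2πi p.2)) S :=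
    (hω'.comp_ofReal_mul_e2πi.clm_apply (by fun_prop)).clm_apply (by fun_prop)
  have hω'vu : ContinuousOn
      (fun p : ℝ × ℝ => ω' (p.1 * e2πi p.2) (e2πi p.2) (Complex.I * e2πi p.2)) S :=
    (hω'.comp_ofReal_mul_e2πi.clm_apply (by fun_prop)).clm_apply (by fun_prop)
  exact ((hω'uv.sub hω'vu).add (hωu.mul hωv)).sub (hωv.mul hωu)

/-- With `A = circleTransportCoeff ω r` and `B t = ω (r * e2πi t) (e2πi t)`, whose derivative `B'`
is computed in `hasDerivAt_apply_ofReal_mul_e2πi`, this reads `∂ᵣA = 2πr Ω - (B' + B A - A B)`. -/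
theorem circleTransportCoeffDeriv_eq_smul_circleCurvature_sub {r t : ℝ} :
    circleTransportCoeffDeriv ω ω' r t = (2 * π * r) • circleCurvature ω ω' r t -
      ((2 * π * r) • ω' (r * e2πi t) (Complex.I * e2πi t) (e2πi t) +
        (2 * π) • ω (r * e2πi t) (Complex.I * e2πi t) +
        ω (r * e2πi t) (e2πi t) * circleTransportCoeff ω r t -
        circleTransportCoeff ω r t * ω (r * e2πi t) (e2πi t)) := by
  simp only [circleCurvature, circleTransportCoeff, circleTransportCoeffDeriv, mul_neg, neg_mul,
    mul_smul_comm, smul_mul_assoc]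
  module

theorem hasDerivWithinAt_mul_ringInverse_mul_apply_ofReal_mul_e2πi [HasSummableGeomSeries E]
    {g : ℝ → E} {s : Set ℝ} {r t : ℝ} (c : E)
    (hω : HasFDerivAt ω (ω' (r * e2πi t)) (r * e2πi t))
    (hg : HasDerivWithinAt g (circleTransportCoeff ω r t * g t) s t) (hu : IsUnit (g t)) :
    HasDerivWithinAt (fun τ => c * (Ring.inverse (g τ) * ω (r * e2πi τ) (e2πi τ) * g τ))
      ((2 * π * r) • (c * Ring.inverse (g t) * circleCurvature ω ω' r t * g t) -
        c * Ring.inverse (g t) * circleTransportCoeffDeriv ω ω' r t * g t) s t := by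
  refine ((hasDerivWithinAt_ringInverse_mul_mul hg hu
    (hasDerivAt_apply_ofReal_mul_e2πi hω).hasDerivWithinAt).const_mul c).congr_deriv ?_
  rw [circleTransportCoeffDeriv_eq_smul_circleCurvature_sub]
  simp only [mul_sub, sub_mul, mul_smul_comm, smul_mul_assoc, ← mul_assoc]
  abel

theorem integral_circleTransportCoeffDeriv_eq_smul_integral_circleCurvature [CompleteSpace E]
    {g : ℝ → E} {R r : ℝ} (c : E) (hω : ∀ x ∈ Metric.ball (0:ℂ) R, HasFDerivAt ω (ω' x) x)
    (hω' : ContinuousOn ω' (Metric.ball 0 R)) (hr : |r| < R) (hgauge : ω r 1 = 0)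
    (hg : ∀ t ∈ Icc (0:ℝ) 1, HasDerivWithinAt g (circleTransportCoeff ω r t * g t) (Icc 0 1) t)
    (hunit : ∀ t ∈ Icc (0:ℝ) 1, IsUnit (g t)) :
    ∫ t in (0:ℝ)..1, c * Ring.inverse (g t) * circleTransportCoeffDeriv ω ω' r t * g t =
      (2 * π * r) • ∫ t in (0:ℝ)..1, c * Ring.inverse (g t) * circleCurvature ω ω' r t * g t := by
  have hmem (t : ℝ) : (r, t) ∈ Ioo (-R) R ×ˢ univ := ⟨abs_lt.1 hr, trivial⟩
  have hωc : ContinuousOn ω (Metric.ball 0 R) := fun x hx =>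
    (hω x hx).continuousAt.continuousWithinAt
  have hconj := (continuousOn_const (c := c)).mul
    (continuousOn_ringInverse_of_hasDerivWithinAt_mul hg hunit)
  have hgc : ContinuousOn g (Icc 0 1) := fun t ht => (hg t ht).continuousWithinAt
  have hX : ContinuousOn (fun t => c * Ring.inverse (g t) * circleCurvature ω ω' r t * g t)
      (Icc 0 1) :=
    (hconj.mul (((continuousOn_circleCurvature hωc hω').comp_continuous
      (Continuous.prodMk_right r) hmem).continuousOn)).mul hgc
  have hY : ContinuousOn
      (fun t => c * Ring.inverse (g t) * circleTransportCoeffDeriv ω ω' r t * g t) (Icc 0 1) :=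
    (hconj.mul (((continuousOn_circleTransportCoeffDeriv hωc hω').comp_continuous
      (Continuous.prodMk_right r) hmem).continuousOn)).mul hgc
  have hFTC := intervalIntegral.integral_eq_sub_of_hasDerivWithinAt_Icc
    (fun t ht => hasDerivWithinAt_mul_ringInverse_mul_apply_ofReal_mul_e2πi c
      (hω _ (ofReal_mul_e2πi_mem_ball hr t)) (hg t ht) (hunit t ht))
    ((hX.const_smul _).sub hY) (right_mem_Icc.2 zero_le_one)
  have hXi : IntervalIntegrable (fun t =>
      (2 * π * r) • (c * Ring.inverse (g t) * circleCurvature ω ω' r t * g t)) volume 0 1 :=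
    (hX.const_smul _).intervalIntegrable_of_Icc zero_le_one
  rw [intervalIntegral.integral_sub hXi (hY.intervalIntegrable_of_Icc zero_le_one),
    intervalIntegral.integral_smul] at hFTC
  simp only [e2πi_one, e2πi_zero, mul_one, hgauge, mul_zero, zero_mul, sub_zero] at hFTC
  exact (sub_eq_zero.1 hFTC).symm

theorem hasDerivAt_holonomy_of_axial_gauge [CompleteSpace E] [IsArtinianRing Eᵐᵒᵖ]
    {g : ℝ → ℝ → E} {R r : ℝ} (hω : ∀ x ∈ Metric.ball (0:ℂ) R, HasFDerivAt ω (ω' x) x)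
    (hω' : ContinuousOn ω' (Metric.ball 0 R)) (haxial : ∀ s ∈ Ioo (0:ℝ) R, ω s 1 = 0)
    (hg0 : ∀ s ∈ Ioo (0:ℝ) R, g s 0 = 1)
    (hg : ∀ s ∈ Ioo (0:ℝ) R, ∀ t ∈ Icc (0:ℝ) 1,
      HasDerivWithinAt (g s) (circleTransportCoeff ω s t * g s t) (Icc 0 1) t)
    (hr : r ∈ Ioo 0 R) :
    HasDerivAt (fun s => g s 1) ((2 * π * r) • ∫ t in (0:ℝ)..1,
      g r 1 * Ring.inverse (g r t) * circleCurvature ω ω' r t * g r t) r := by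
  have hωc : ContinuousOn ω (Metric.ball 0 R) := fun x hx =>
    (hω x hx).continuousAt.continuousWithinAt
  have hrR : |r| < R := by rw [abs_of_pos hr.1]; exact hr.2
  have hJ : Icc (r / 2) ((r + R) / 2) ⊆ Ioo 0 R := fun s hs =>
    ⟨by linarith [hs.1, hr.1], by linarith [hs.2, hr.2]⟩
  have hJR : Icc (r / 2) ((r + R) / 2) ⊆ Ioo (-R) R :=
    hJ.trans (Ioo_subset_Ioo_left (by linarith [hr.1, hr.2]))
  have hA := continuousOn_circleTransportCoeff hωc
  have hunit : ∀ t ∈ Icc (0:ℝ) 1, IsUnit (g r t) := fun t ht =>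
    isUnit_of_hasDerivWithinAt_mul (hA.comp (Continuous.prodMk_right r).continuousOn
      fun _ _ => ⟨abs_lt.1 hrR, trivial⟩) (hg r hr) (by rw [hg0 r hr]; exact isUnit_one) ht
  have hD := hasDerivAt_apply_one_of_hasDerivWithinAt_mul
    (hA.mono (prod_mono hJR (subset_univ _)))
    ((continuousOn_circleTransportCoeffDeriv hωc hω').mono (prod_mono hJR (subset_univ _)))
    (fun s hs t _ => hasDerivAt_circleTransportCoeff
      (hω _ (ofReal_mul_e2πi_mem_ball (abs_lt.2 (hJR hs)) t)))
    (fun s hs => hg s (hJ hs)) (fun s hs => hg0 s (hJ hs)) hunit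
    ⟨by linarith [hr.1], by linarith [hr.2]⟩
  exact hD.congr_deriv (integral_circleTransportCoeffDeriv_eq_smul_integral_circleCurvature
    (g r 1) hω hω' hrR (haxial r hr) (hg r hr) hunit)

end CircleCurvature

attribute [local instance] Matrix.frobeniusNormedRing Matrix.frobeniusNormedAlgebra

theorem hasDerivAt_holonomy_axial_gauge_general
    (n : ℕ) (R : ℝ)
    (ω : ℂ → (ℂ →L[ℝ] Matrix (Fin n) (Fin n) ℂ))
    (hω : ContDiffOn ℝ 2 ω (Metric.ball (0:ℂ) R))
    (haxial : ∀ s ∈ Set.Ioo (0:ℝ) R, ω (s : ℂ) 1 = 0)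
    (g : ℝ → ℝ → Matrix (Fin n) (Fin n) ℂ)
    (hg0 : ∀ r ∈ Set.Ioo (0:ℝ) R, g r 0 = 1)
    (hg : ∀ r ∈ Set.Ioo (0:ℝ) R, ∀ t ∈ Set.Icc (0:ℝ) 1,
      HasDerivWithinAt (g r)
        (-((2 * π * r) • (ω (r * e2πi t) (Complex.I * e2πi t) * g r t))) (Set.Icc 0 1) t)
    (r : ℝ) (hr : r ∈ Set.Ioo (0:ℝ) R) :
    HasDerivAt (fun ρ => g ρ 1)
      ((2 * π * r) • ∫ t in (0:ℝ)..1,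
        g r 1 * (g r t)⁻¹ *
          curvature ω (r * e2πi t) (Complex.I * e2πi t) (e2πi t) * g r t) r := by
  have hω' : ∀ x ∈ Metric.ball (0:ℂ) R, HasFDerivAt ω (fderiv ℝ ω x) x := fun x hx =>
    ((hω.differentiableOn two_ne_zero).differentiableAt
      (Metric.isOpen_ball.mem_nhds hx)).hasFDerivAt
  -- `rfl` closes a goal whose sides differ only in the (defeq) topologies on matrices: the
  -- entrywise one of the statement and the Frobenius one of the normed algebra.
  have hgA : ∀ s ∈ Ioo (0:ℝ) R, ∀ t ∈ Icc (0:ℝ) 1,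
      HasDerivWithinAt (g s) (circleTransportCoeff ω s t * g s t) (Icc 0 1) t := fun s hs t ht =>
    (hg s hs t ht).congr_deriv (by rw [← smul_mul_assoc, ← neg_mul]; rfl)
  have hD := hasDerivAt_holonomy_of_axial_gauge hω'
    (hω.continuousOn_fderiv_of_isOpen Metric.isOpen_ball one_le_two) haxial hg0 hgA hr
  simp only [Matrix.nonsing_inv_eq_ringInverse]
  exact hD

/-- For a `C²` connection form `ω` on the disk `B_R ⊂ ℝ² ≃ ℂ` satisfying the
axial gauge condition `ω((s,0))[e₁] = 0` for `s ∈ (0,R)`, the holonomy `g_r(1)` along the circle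
of radius `r` satisfies
`d/dr g_r(1) = 2πr ∫₀¹ g_r(1)·g_r(t)⁻¹·Ω(re^{2πit})[ie^{2πit}, e^{2πit}]·g_r(t) dt`. -/
theorem hasDerivAt_holonomy_axial_gauge
    (n : ℕ) (hn : 1 ≤ n) (R : ℝ) (hR : 0 < R)
    (ω : ℂ → (ℂ →L[ℝ] Matrix (Fin n) (Fin n) ℂ))
    (hω : ContDiffOn ℝ 2 ω (Metric.ball (0:ℂ) R))
    (haxial : ∀ s ∈ Set.Ioo (0:ℝ) R, ω (s : ℂ) 1 = 0)
    (g : ℝ → ℝ → Matrix (Fin n) (Fin n) ℂ)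
    (hg0 : ∀ r ∈ Set.Ioo (0:ℝ) R, g r 0 = 1)
    (hg : ∀ r ∈ Set.Ioo (0:ℝ) R, ∀ t ∈ Set.Icc (0:ℝ) 1,
      HasDerivWithinAt (g r)
        (-((2 * π * r) • (ω (r * e2πi t) (Complex.I * e2πi t) * g r t))) (Set.Icc 0 1) t)
    (r : ℝ) (hr : r ∈ Set.Ioo (0:ℝ) R) :
    HasDerivAt (fun ρ => g ρ 1)
      ((2 * π * r) • ∫ t in (0:ℝ)..1,
        g r 1 * (g r t)⁻¹ *
          curvature ω (r * e2πi t) (Complex.I * e2πi t) (e2πi t) * g r t) r :=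
  hasDerivAt_holonomy_axial_gauge_general n R ω hω haxial g hg0 hg r hr
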